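/- The girth of the cyclic Kautz digraph CK(d,ℓ) is at least the minimum positive integer k ≥ 2 such that ℓ is not congruent to 1 modulo k. -/
import Mathlib

lemma xeq {n m : ℕ} (x : Fin n → Fin m) {a b : ℕ} {ha : a < n} {hb : b < n}
    (h : a = b) : x ⟨a, ha⟩ = x ⟨b, hb⟩ := by subst h; rfl


/-- Consecutive entries are distinct. -/
abbrev consecNe {m n : ℕ} (x : Fin m → Fin n) : Prop :=
  ∀ i j : Fin m, j.val = i.val + 1 → x i ≠ x j

/-- First entry distinct from last entry. -/
abbrev firstNeLast {m n : ℕ} (x : Fin m → Fin n) : Prop :=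
  ∀ i j : Fin m, i.val = 0 → j.val = m - 1 → x i ≠ x j

/-- Vertex of the cyclic Kautz digraph. -/
abbrev ckVert {m n : ℕ} (x : Fin m → Fin n) : Prop := consecNe x ∧ firstNeLast x

/-- Arc of the cyclic Kautz digraph: `y` is the left shift of `x` with a new last
symbol distinct from `x₂` and `x_ℓ`. -/
abbrev ckAdj {m n : ℕ} (x y : Fin m → Fin n) : Prop :=
  (∀ i j : Fin m, j.val = i.val + 1 → y i = x j) ∧
  (∀ i j : Fin m, i.val = m - 1 → j.val = 1 → y i ≠ x j) ∧
  (∀ i : Fin m, i.val = m - 1 → y i ≠ x i)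

/-- A walk of length `k` in `CK(d,ℓ)` from `u` to `v`: a sequence of `k+1` vertices
starting at `u`, ending at `v`, with consecutive vertices adjacent. -/
abbrev ckWalk {m n : ℕ} (k : ℕ) (u v : Fin m → Fin n) : Prop :=
  ∃ w : Fin (k + 1) → Fin m → Fin n, w 0 = u ∧ w (Fin.last k) = v ∧
    (∀ i, ckVert (w i)) ∧ ∀ i j : Fin (k + 1), j.val = i.val + 1 → ckAdj (w i) (w j)

/-- The girth of `CK(d,ℓ)` is at least the minimum integer `k ≥ 2` such that
`ℓ ≢ 1 (mod k)`: if `CK(d,ℓ)` contains a directed cycle of length `g ≥ 1` (here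
witnessed by a closed walk of length `g`), then `k ≤ g`. -/
theorem stmt11 (d ℓ k g : ℕ) (hd : 2 ≤ d) (hℓ : 2 ≤ ℓ)
    (hk : 2 ≤ k) (hknot : ℓ % k ≠ 1) (hkmin : ∀ j, 2 ≤ j → j < k → ℓ % j = 1)
    (hg : 1 ≤ g)
    (hcycle : ∃ x : Fin ℓ → Fin (d + 1), ckVert x ∧ ckWalk g x x) :
    k ≤ g := by
  by_contra hcon
  push_neg at hcon
  obtain ⟨x, ⟨hcne, hfnl⟩, w, hw0, hwlast, hvert, hadj⟩ := hcycle
  -- shift lemma: (w t) i = x (i + t) when i + t ≤ ℓ - 1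
  have shift : ∀ t : ℕ, ∀ _ht : t ≤ g, ∀ i : ℕ, ∀ _hi : i + t ≤ ℓ - 1,
      (w ⟨t, by omega⟩) ⟨i, by omega⟩ = x ⟨i + t, by omega⟩ := by
    intro t
    induction t with
    | zero =>
      intro _ i hi
      have h0 : (⟨0, by omega⟩ : Fin (g+1)) = 0 := rfl
      rw [h0, hw0]
      exact xeq x (by omega)
    | succ t ih =>
      intro ht i hi
      have hstep := (hadj ⟨t, by omega⟩ ⟨t+1, by omega⟩ rfl).1
        ⟨i, by omega⟩ ⟨i+1, by omega⟩ rfl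
      rw [hstep, ih (by omega) (i+1) (by omega)]
      exact xeq x (by omega)
  have hper : ∀ i : ℕ, ∀ _hi : i + g ≤ ℓ - 1,
      x ⟨i, by omega⟩ = x ⟨i + g, by omega⟩ := by
    intro i hi
    have h1 := shift g le_rfl i hi
    have h2 : (⟨g, by omega⟩ : Fin (g+1)) = Fin.last g := rfl
    rw [h2, hwlast] at h1
    exact h1
  by_cases hg1 : g = 1
  · subst hg1
    exact hcne ⟨0, by omega⟩ ⟨1, by omega⟩ rfl (hper 0 (by omega))
  · have hg2 : 2 ≤ g := by omega
    have hmod : ℓ % g = 1 := hkmin g hg2 (by omega)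
    have hdm : g * (ℓ / g) + ℓ % g = ℓ := Nat.div_add_mod ℓ g
    set q := ℓ / g with hq
    have hql : q * g = ℓ - 1 := by rw [mul_comm]; omega
    have hchain : ∀ m : ℕ, ∀ _hm : m * g ≤ ℓ - 1, x ⟨0, by omega⟩ = x ⟨m * g, by omega⟩ := by
      intro m
      induction m with
      | zero => intro _; exact xeq x (by omega)
      | succ m ih =>
        intro hm
        have he : (m+1) * g = m * g + g := by ring
        have hm' : m * g ≤ ℓ - 1 := by omega
        have hp := hper (m * g) (by omega)
        rw [ih hm', hp]
        exact xeq x (by omega)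
    have hfin := hchain q (by omega)
    refine hfnl ⟨0, by omega⟩ ⟨ℓ - 1, by omega⟩ rfl rfl ?_
    rw [hfin]
    exact xeq x (by omega)
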